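/- For every n ≥ 0 and every P ∈ D_n^{h,≥}, the number of occurrences of the factor UDU in P equals the number of occurrences of the factor FF in φ(P) plus the number of occurrences of the factor FUD in φ(P). -/

import Mathlib

inductive Step : Type
  | U | D | F
  deriving DecidableEq, Repr

open Step

/-- Number of occurrences of `p` as a factor (consecutive steps) of `w`. -/
def countFactor (p w : List Step) : ℕ :=
  w.tails.countP fun t => p.isPrefixOf t

/-- `w` is a Dyck path (word over {U,D} with as many U's as D's,
every prefix having at least as many U's as D's). -/
def IsDyck (w : List Step) : Prop :=
  w.count F = 0 ∧ w.count U = w.count D ∧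
    ∀ p : List Step, p <+: w → p.count D ≤ p.count U

/-- `w` is a Motzkin path. -/
def IsMotzkin (w : List Step) : Prop :=
  w.count U = w.count D ∧ ∀ p : List Step, p <+: w → p.count D ≤ p.count U

/-- The (maximal) height of a path. -/
def height (w : List Step) : ℕ :=
  (w.inits.map fun p => p.count U - p.count D).foldr max 0

/-- The set `D^{h,≥}` of Dyck paths with first return decomposition
`P = U α D β` satisfying `h(UαD) ≥ h(β)`, recursively. -/
inductive DH : List Step → Prop
  | nil : DH []
  | cons (α β : List Step) : DH α → DH β →
      height (U :: (α ++ [D])) ≥ height β → DH (U :: (α ++ [D] ++ β))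

/-- The map φ from `D^{h,≥}` to Motzkin paths, as a relation:
φ(ε)=ε, φ(αUD)=φ(α)F, φ(αUUβDγD)=φ(α)φ(γ)Uφ(β)D. -/
inductive Phi : List Step → List Step → Prop
  | nil : Phi [] []
  | flat (α a : List Step) : DH α → Phi α a →
      Phi (α ++ [U, D]) (a ++ [F])
  | up (α β γ a b c : List Step) : DH α → DH β → DH γ →
      Phi α a → Phi β b → Phi γ c →
      Phi (α ++ [U, U] ++ β ++ [D] ++ γ ++ [D]) (a ++ c ++ U :: (b ++ [D]))

/-- Auxiliary: the list starts with one or more `F`'s followed by a `D`. -/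
def fThenD : List Step → Bool
  | F :: D :: _ => true
  | F :: rest => fThenD rest
  | _ => false

/-- Auxiliary: the list starts with one or more `F`'s followed by a `U`. -/
def fThenU : List Step → Bool
  | F :: U :: _ => true
  | F :: rest => fThenU rest
  | _ => false

/-- Number of occurrences of factors of the form `U F^k D` with `k ≥ 1` in `w`. -/
def countUFD (w : List Step) : ℕ :=
  w.tails.countP fun t => match t with
    | U :: rest => fThenD rest
    | _ => false

/-- Number of occurrences of factors of the form `U F^k U` with `k ≥ 1` in `w`. -/
def countUFU (w : List Step) : ℕ :=
  w.tails.countP fun t => match t with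
    | U :: rest => fThenU rest
    | _ => false

/-!
Both counts are additive over the pieces of the recursion defining φ, up to the occurrences that
straddle a junction. In the step φ(αUD) = φ(α)F a new UDU appears exactly when α ends in UD, i.e.
when φ(α) ends in F, which is exactly when a new FF appears. In the step
φ(αUUβDγD) = φ(α)φ(γ)Uφ(β)D, membership in D^{h,≥} forbids α to end in UD (that arch of height 1
would be followed by one of height ≥ 2), so the only straddling occurrences are a UDU when
β = ε ≠ γ and an FUD when φ(γ) ends in F and β = ε. The height condition h(γ) ≤ h(UβD) makes
these coincide: for β = ε it forces γ ∈ (UD)*.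
-/

theorem List.prefix_append_iff {α : Type*} {p w v : List α} :
    p <+: w ++ v ↔ p <+: w ∨ (w.length < p.length ∧ w <+: p ∧ p.drop w.length <+: v) := by
  constructor
  · intro h
    rcases le_or_gt p.length w.length with hle | hlt
    · exact Or.inl (List.prefix_of_prefix_length_le h (List.prefix_append w v) hle)
    · have hw : w <+: p := List.prefix_of_prefix_length_le (List.prefix_append w v) h hlt.le
      refine Or.inr ⟨hlt, hw, ?_⟩
      rw [← List.prefix_append_right_inj w, List.prefix_iff_eq_append.mp hw]
      exact h
  · rintro (h | ⟨-, hw, hv⟩)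
    · exact List.prefix_append_of_prefix h
    · rw [← List.prefix_iff_eq_append.mp hw]
      exact (List.prefix_append_right_inj w).mpr hv

theorem List.not_singleton_prefix_append {α : Type*} {x : α} {u v : List α}
    (hu : ¬ [x] <+: u) (hv : ¬ [x] <+: v) : ¬ [x] <+: u ++ v := by
  rcases u with _ | ⟨y, u⟩ <;> simp_all

theorem List.not_singleton_suffix_append {α : Type*} {x : α} {u v : List α}
    (hu : ¬ [x] <:+ u) (hv : ¬ [x] <:+ v) : ¬ [x] <:+ u ++ v := by
  rcases List.eq_nil_or_concat v with rfl | ⟨v, y, rfl⟩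
  · simpa using hu
  · simp_all [← List.append_assoc]

theorem countFactor_nil {p : List Step} (hp : p ≠ []) : countFactor p [] = 0 := by
  cases p <;> simp_all [countFactor]

theorem countFactor_cons (p : List Step) (x : Step) (w : List Step) :
    countFactor p (x :: w) = countFactor p w + if p <+: x :: w then 1 else 0 := by
  simp [countFactor, List.countP_cons]

/-- The number of occurrences of `p` in `u ++ v` that meet both `u` and `v`; the `i`-th summand
counts those with `i + 1` letters in `u`. -/
def crossCount (p u v : List Step) : ℕ :=
  ∑ i ∈ Finset.range (p.length - 1), if p.take (i + 1) <:+ u ∧ p.drop (i + 1) <+: v then 1 else 0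

theorem crossCount_nil_left (p v : List Step) : crossCount p [] v = 0 := by
  refine Finset.sum_eq_zero fun i hi => if_neg ?_
  simp only [Finset.mem_range] at hi
  simp only [List.suffix_nil, List.take_eq_nil_iff]
  rintro ⟨h | rfl, -⟩ <;> simp_all

theorem crossCount_cons (p : List Step) (x : Step) (u v : List Step) :
    crossCount p (x :: u) v = crossCount p u v +
      if u.length + 1 < p.length ∧ x :: u <+: p ∧ p.drop (u.length + 1) <+: v then 1 else 0 := by
  have hsummand : ∀ i ∈ Finset.range (p.length - 1),
      (if p.take (i + 1) <:+ x :: u ∧ p.drop (i + 1) <+: v then 1 else 0) =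
        (if p.take (i + 1) <:+ u ∧ p.drop (i + 1) <+: v then 1 else 0) +
          if i = u.length ∧ x :: u <+: p ∧ p.drop (i + 1) <+: v then 1 else 0 := by
    intro i hi
    simp only [Finset.mem_range] at hi
    have hlen : (p.take (i + 1)).length = i + 1 := by simp only [List.length_take]; omega
    by_cases hiu : i = u.length
    · subst hiu
      have h1 : ¬ p.take (u.length + 1) <:+ u := fun h => by simpa [hlen] using h.length_le
      have h2 : p.take (u.length + 1) <:+ x :: u ↔ x :: u <+: p := by
        rw [List.suffix_cons_iff, List.prefix_iff_eq_take, eq_comm]; simp [h1]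
      simp [h1, h2]
    · have h1 : p.take (i + 1) <:+ x :: u ↔ p.take (i + 1) <:+ u := by
        rw [List.suffix_cons_iff, or_iff_right]
        exact fun h => hiu (by simpa [hlen] using congrArg List.length h)
      simp [h1, hiu]
  rw [crossCount, Finset.sum_congr rfl hsummand, Finset.sum_add_distrib, ← crossCount]
  congr 1
  rw [Finset.sum_congr rfl fun i _ => ite_and .., Finset.sum_ite_eq']
  simp only [Finset.mem_range, Nat.lt_sub_iff_add_lt, ← ite_and]

theorem countFactor_append {p : List Step} (hp : p ≠ []) (u v : List Step) :
    countFactor p (u ++ v) = countFactor p u + countFactor p v + crossCount p u v := by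
  induction u with
  | nil => simp [countFactor_nil hp, crossCount_nil_left]
  | cons x u ih =>
    rw [List.cons_append, countFactor_cons, ih, countFactor_cons, crossCount_cons,
      ← List.cons_append]
    simp only [List.prefix_append_iff, List.length_cons]
    by_cases h : p <+: x :: u
    · have hlen : ¬ u.length + 1 < p.length := by simpa using h.length_le
      simp only [h, hlen, false_and, or_false, ↓reduceIte, add_zero]
      omega
    · simp only [h, false_or, ↓reduceIte, add_zero]
      omega

theorem crossCount_pair (x y : Step) (u v : List Step) :
    crossCount [x, y] u v = if [x] <:+ u ∧ [y] <+: v then 1 else 0 := by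
  simp only [crossCount, List.length_cons, List.length_nil, Finset.sum_range_succ,
    Finset.sum_range_zero]
  simp

theorem crossCount_triple (x y z : Step) (u v : List Step) :
    crossCount [x, y, z] u v =
      (if [x] <:+ u ∧ [y, z] <+: v then 1 else 0) + if [x, y] <:+ u ∧ [z] <+: v then 1 else 0 := by
  simp only [crossCount, List.length_cons, List.length_nil, Finset.sum_range_succ,
    Finset.sum_range_zero]
  simp

namespace IsMotzkin

theorem nil : IsMotzkin [] :=
  ⟨rfl, fun q hq => by simp [List.prefix_nil.mp hq]⟩

theorem arch {a b : List Step} (ha : IsMotzkin a) (hb : IsMotzkin b) :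
    IsMotzkin (U :: (a ++ [D] ++ b)) := by
  obtain ⟨hca, hpa⟩ := ha
  obtain ⟨hcb, hpb⟩ := hb
  refine ⟨?_, ?_⟩
  · simp only [List.count_cons, List.count_append, List.count_nil, beq_iff_eq, reduceCtorEq,
      ↓reduceIte]
    omega
  rintro (_ | ⟨s, q⟩) hq
  · simp
  obtain ⟨rfl, hq'⟩ := List.cons_prefix_cons.mp hq
  rw [List.append_assoc, List.prefix_append_iff] at hq'
  rcases hq' with hqa | ⟨-, haq, hr⟩
  · have := hpa q hqa
    simp only [List.count_cons, beq_iff_eq, reduceCtorEq, ↓reduceIte]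
    omega
  rw [← List.prefix_iff_eq_append.mp haq]
  rcases List.prefix_cons_iff.mp hr with hr | ⟨r, hr, hrb⟩ <;> rw [hr]
  · simp only [List.count_cons, List.count_append, List.count_nil, beq_iff_eq, reduceCtorEq,
      ↓reduceIte]
    omega
  · have := hpb r hrb
    simp only [List.count_cons, List.count_append, beq_iff_eq, reduceCtorEq, ↓reduceIte]
    omega

theorem not_suffix_U {w : List Step} (hw : IsMotzkin w) : ¬ [U] <:+ w := by
  rintro ⟨s, rfl⟩
  have hs := hw.2 s (List.prefix_append s [U])
  have hcount := hw.1
  simp only [List.count_cons, List.count_append, List.count_nil, beq_iff_eq, reduceCtorEq,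
    ↓reduceIte] at hcount
  omega

theorem length_le_of_append_D_eq {a a' b b' : List Step} (ha : IsMotzkin a)
    (ha' : IsMotzkin a') (h : a ++ D :: b = a' ++ D :: b') : a'.length ≤ a.length := by
  by_contra! hlt
  have hpre : a ++ [D] <+: a' :=
    List.prefix_of_prefix_length_le ⟨b, by simpa using h⟩ (List.prefix_append a' _) (by simpa)
  have hcount := ha'.2 _ hpre
  simp only [List.count_cons, List.count_append, List.count_nil, beq_iff_eq, reduceCtorEq,
    ↓reduceIte] at hcount
  have := ha.1
  omega

theorem eq_of_append_D_eq {a a' b b' : List Step} (ha : IsMotzkin a) (ha' : IsMotzkin a')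
    (h : a ++ D :: b = a' ++ D :: b') : a = a' ∧ b = b' := by
  have hlen := le_antisymm (length_le_of_append_D_eq ha' ha h.symm)
    (length_le_of_append_D_eq ha ha' h)
  obtain ⟨rfl, hb⟩ := List.append_inj h hlen
  exact ⟨rfl, List.cons_injective hb⟩

end IsMotzkin

theorem le_height_of_prefix {q w : List Step} (h : q <+: w) :
    q.count U - q.count D ≤ height w :=
  List.le_max_of_le' 0 (List.mem_map.mpr ⟨q, (List.mem_inits _ _).mpr h, rfl⟩) le_rfl

theorem two_le_height_U_U (w : List Step) : 2 ≤ height (U :: U :: w) :=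
  le_height_of_prefix (q := [U, U]) ⟨w, rfl⟩

theorem height_U_D : height [U, D] = 1 := by decide

namespace DH

theorem isMotzkin {w : List Step} (h : DH w) : IsMotzkin w := by
  induction h with
  | nil => exact IsMotzkin.nil
  | cons _ _ _ _ _ iha ihb => exact iha.arch ihb

theorem eq_nil_or_eq_cons {w : List Step} (h : DH w) : w = [] ∨ ∃ w', w = U :: w' := by
  cases h with
  | nil => exact Or.inl rfl
  | cons α β _ _ _ => exact Or.inr ⟨_, rfl⟩

theorem of_arch {a b : List Step} (h : DH (U :: (a ++ [D] ++ b))) (ha : IsMotzkin a) :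
    DH a ∧ DH b ∧ height b ≤ height (U :: (a ++ [D])) := by
  generalize hw : U :: (a ++ [D] ++ b) = w at h
  cases h with
  | nil => cases hw
  | cons α β hα hβ hh =>
    obtain ⟨rfl, rfl⟩ := IsMotzkin.eq_of_append_D_eq ha hα.isMotzkin (by simpa using hw)
    exact ⟨hα, hβ, hh⟩

theorem of_append {α t : List Step} (hα : DH α) (h : DH (α ++ t)) :
    DH t ∧ ([U, D] <:+ α → height t ≤ 1) := by
  induction hα with
  | nil => exact ⟨h, by simp⟩
  | cons α₁ β₁ hα₁ hβ₁ _ _ ih =>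
    obtain ⟨-, hβt, hle⟩ := of_arch (b := β₁ ++ t) (by simpa using h) hα₁.isMotzkin
    obtain ⟨hDt, hsuf⟩ := ih hβt
    refine ⟨hDt, fun hUD => ?_⟩
    rcases hβ₁.eq_nil_or_eq_cons with rfl | ⟨β', rfl⟩
    · have hα₁nil : α₁ = [] := by
        have : [U] ++ [D] <:+ (U :: α₁) ++ [D] := by simpa using hUD
        rcases List.suffix_cons_iff.mp (List.suffix_append_self_iff.mp this) with h | h
        · simpa using h.symm
        · exact absurd h hα₁.isMotzkin.not_suffix_U
      subst hα₁nil
      simpa [height_U_D] using hle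
    · refine hsuf (List.suffix_of_suffix_length_le hUD ⟨U :: (α₁ ++ [D]), by simp⟩ ?_)
      cases hβ₁
      simp only [List.length_cons, List.length_append, List.length_nil]
      omega

theorem of_up {α β γ : List Step} (hα : DH α) (hβ : DH β) (hγ : DH γ)
    (h : DH (α ++ [U, U] ++ β ++ [D] ++ γ ++ [D])) :
    ¬ [U, D] <:+ α ∧ height γ ≤ height (U :: (β ++ [D])) := by
  obtain ⟨hlast, hsuf⟩ := of_append (t := U :: U :: (β ++ [D] ++ γ ++ [D])) hα (by simpa using h)
  refine ⟨fun hUD => ?_, ?_⟩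
  · have := two_le_height_U_U (β ++ [D] ++ γ ++ [D])
    have := hsuf hUD
    omega
  · have hβγ := hβ.isMotzkin.arch hγ.isMotzkin
    obtain ⟨hinner, -, -⟩ :=
      of_arch (a := U :: (β ++ [D] ++ γ)) (b := []) (by simpa using hlast) hβγ
    exact (of_arch hinner hβ.isMotzkin).2.2

theorem suffix_U_D_of_height_le_one {γ : List Step} (hγ : DH γ) (hle : height γ ≤ 1)
    (hne : γ ≠ []) : [U, D] <:+ γ := by
  induction hγ with
  | nil => exact absurd rfl hne
  | cons α β hα hβ hh _ ihβ =>
    cases hα with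
    | cons α' β' _ _ _ =>
      have := two_le_height_U_U (α' ++ [D] ++ β' ++ [D] ++ β)
      rw [show U :: (U :: (α' ++ [D] ++ β') ++ [D] ++ β) = U :: U :: (α' ++ [D] ++ β' ++ [D] ++ β)
        by simp] at hle
      omega
    | nil =>
      rcases eq_or_ne β [] with rfl | hβne
      · simp
      · exact (ihβ (by simpa [height_U_D] using hh) hβne).trans ⟨[U, D], by simp⟩

end DH

namespace Phi

theorem eq_nil_iff {P m : List Step} (h : Phi P m) : P = [] ↔ m = [] := by
  cases h <;> simp

theorem not_suffix_U {P m : List Step} (h : Phi P m) : ¬ [U] <:+ m := by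
  cases h with
  | nil => simp
  | flat => simp
  | up _ _ _ a b c =>
    rw [show a ++ c ++ U :: (b ++ [D]) = (a ++ c ++ U :: b) ++ [D] by simp,
      List.singleton_suffix_append_singleton_iff]
    decide

theorem not_prefix_D {P m : List Step} (h : Phi P m) : ¬ [D] <+: m := by
  induction h with
  | nil => simp
  | flat _ _ _ _ ih => exact List.not_singleton_prefix_append ih (by simp)
  | up _ _ _ _ _ _ _ _ _ _ _ _ iha _ ihc =>
    exact List.not_singleton_prefix_append (List.not_singleton_prefix_append iha ihc) (by simp)

theorem suffix_U_D_iff {P m : List Step} (h : Phi P m) : [U, D] <:+ P ↔ [F] <:+ m := by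
  cases h with
  | nil => simp
  | flat => simp
  | up α β γ a b c _ _ hγ _ _ _ =>
    have hX : ¬ [U] <:+ α ++ [U, U] ++ β ++ [D] ++ γ :=
      List.not_singleton_suffix_append
        (by rw [List.singleton_suffix_append_singleton_iff]; decide) hγ.isMotzkin.not_suffix_U
    rw [show a ++ c ++ U :: (b ++ [D]) = (a ++ c ++ U :: b) ++ [D] by simp,
      List.singleton_suffix_append_singleton_iff]
    exact iff_of_false (fun h => hX (List.suffix_append_self_iff (l₁ := [U]).mp h)) (by decide)

theorem eq_nil_and_ne_nil_iff {β γ b c : List Step} (hγ : DH γ) (hb : Phi β b)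
    (hc : Phi γ c) (hheight : height γ ≤ height (U :: (β ++ [D]))) :
    β = [] ∧ γ ≠ [] ↔ [F] <:+ c ∧ b = [] := by
  rw [← hb.eq_nil_iff, ← hc.suffix_U_D_iff]
  constructor
  · rintro ⟨rfl, hne⟩
    exact ⟨hγ.suffix_U_D_of_height_le_one (by simpa [height_U_D] using hheight) hne, rfl⟩
  · rintro ⟨hsuf, rfl⟩
    exact ⟨rfl, by rintro rfl; simp at hsuf⟩

end Phi

theorem countFactor_U_D_U_append_U_D (α : List Step) :
    countFactor [U, D, U] (α ++ [U, D]) =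
      countFactor [U, D, U] α + if [U, D] <:+ α then 1 else 0 := by
  simp [countFactor_append, crossCount_triple, countFactor_cons, countFactor_nil]

theorem countFactor_F_F_append_F (a : List Step) :
    countFactor [F, F] (a ++ [F]) = countFactor [F, F] a + if [F] <:+ a then 1 else 0 := by
  simp [countFactor_append, crossCount_pair, countFactor_cons, countFactor_nil]

theorem countFactor_F_U_D_append_F (a : List Step) :
    countFactor [F, U, D] (a ++ [F]) = countFactor [F, U, D] a := by
  simp [countFactor_append, crossCount_triple, countFactor_cons, countFactor_nil]

theorem countFactor_U_D_U_up {α β γ : List Step} (hα : DH α) (hα' : ¬ [U, D] <:+ α)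
    (hβ : DH β) (hγ : DH γ) :
    countFactor [U, D, U] (α ++ [U, U] ++ β ++ [D] ++ γ ++ [D]) =
      countFactor [U, D, U] α + countFactor [U, D, U] β + countFactor [U, D, U] γ +
        if β = [] ∧ γ ≠ [] then 1 else 0 := by
  have hαU := hα.isMotzkin.not_suffix_U
  have hβU := hβ.isMotzkin.not_suffix_U
  have hjunction : [D, U] <+: β ++ D :: (γ ++ [D]) ↔ β = [] ∧ γ ≠ [] := by
    rcases hβ.eq_nil_or_eq_cons with rfl | ⟨β, rfl⟩ <;>
      rcases hγ.eq_nil_or_eq_cons with rfl | ⟨γ, rfl⟩ <;> simp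
  simp [countFactor_append, crossCount_triple, countFactor_cons, countFactor_nil, hαU, hα', hβU,
    hjunction, add_assoc, add_comm, add_left_comm]

theorem countFactor_F_F_up {a b c : List Step} (ha : ¬ [F] <:+ a) :
    countFactor [F, F] (a ++ c ++ U :: (b ++ [D])) =
      countFactor [F, F] a + countFactor [F, F] b + countFactor [F, F] c := by
  simp [countFactor_append, crossCount_pair, countFactor_cons, countFactor_nil, ha, add_comm,
    add_left_comm]

theorem countFactor_F_U_D_up {a b c : List Step} (ha : ¬ [F] <:+ a) (haU : ¬ [U] <:+ a)
    (hbU : ¬ [U] <:+ b) (hbD : ¬ [D] <+: b) :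
    countFactor [F, U, D] (a ++ c ++ U :: (b ++ [D])) =
      countFactor [F, U, D] a + countFactor [F, U, D] b + countFactor [F, U, D] c +
        if [F] <:+ c ∧ b = [] then 1 else 0 := by
  have haFU : ¬ [F, U] <:+ a := fun h => haU ((List.suffix_cons F [U]).trans h)
  have hbFU : ¬ [F, U] <:+ b := fun h => hbU ((List.suffix_cons F [U]).trans h)
  have hbD' : [D] <+: b ++ [D] ↔ b = [] := by
    rcases b with _ | ⟨x, b⟩ <;> simp_all
  simp [countFactor_append, crossCount_triple, countFactor_cons, countFactor_nil, ha, haFU, hbFU,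
    hbD', add_assoc, add_comm, add_left_comm]

theorem stmt16_general (P m : List Step) (hP : DH P) (hphi : Phi P m) :
    countFactor [Step.U, Step.D, Step.U] P =
      countFactor [Step.F, Step.F] m + countFactor [Step.F, Step.U, Step.D] m := by
  induction hphi with
  | nil => rfl
  | flat α a hα hφ ih =>
    rw [countFactor_U_D_U_append_U_D, countFactor_F_F_append_F, countFactor_F_U_D_append_F,
      ih hα]
    simp only [hφ.suffix_U_D_iff]
    omega
  | up α β γ a b c hα hβ hγ hφa hφb hφc iha ihb ihc =>
    obtain ⟨hα', hheight⟩ := DH.of_up hα hβ hγ hP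
    have ha : ¬ [F] <:+ a := hφa.suffix_U_D_iff.not.mp hα'
    rw [countFactor_U_D_U_up hα hα' hβ hγ, countFactor_F_F_up ha,
      countFactor_F_U_D_up ha hφa.not_suffix_U hφb.not_suffix_U hφb.not_prefix_D,
      iha hα, ihb hβ, ihc hγ]
    simp only [Phi.eq_nil_and_ne_nil_iff hγ hφb hφc hheight]
    omega

/-- φ transports UDU: #UDU(P) = #FF(φP) + #FUD(φP). -/
theorem stmt16 (n : ℕ) (P m : List Step) (hP : DH P) (hlen : P.length = 2 * n)
    (hphi : Phi P m) :
    countFactor [Step.U, Step.D, Step.U] P =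
      countFactor [Step.F, Step.F] m + countFactor [Step.F, Step.U, Step.D] m :=
  stmt16_general P m hP hphi
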